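/- Single-row coefficient of general Chern plethysm: for any partition λ with at most n parts and n ≥ 2, the coefficient of s_{(|λ|)} in the Schur expansion of \overline{s}_λ(x_1,...,x_n) equals the number of semistandard Young tableaux of shape λ with entries in {2, 3, ..., n}. -/

import Mathlib

open MvPolynomial Finset
open scoped Classical

/-- The Schur polynomial in `n` variables indexed by a Young diagram `μ`:
the sum over all semistandard fillings of the cells of `μ` with values in `Fin n`
(weakly increasing along rows, strictly increasing down columns) of the product
of the corresponding variables. -/
noncomputable def schur (μ : YoungDiagram) (n : ℕ) : MvPolynomial (Fin n) ℚ :=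
  ∑ T : μ.cells → Fin n,
    if ((∀ a b : μ.cells, a.1.1 = b.1.1 → a.1.2 ≤ b.1.2 → T a ≤ T b) ∧
        (∀ a b : μ.cells, a.1.2 = b.1.2 → a.1.1 < b.1.1 → T a < T b))
    then ∏ c, MvPolynomial.X (T c) else 0

/-- Chern plethysm `\overline{s}_λ(x_1,…,x_n)`: the Schur polynomial `s_λ` evaluated at
the `n` quantities `(x_1+⋯+x_n) - x_i`. -/
noncomputable def sbar (μ : YoungDiagram) (n : ℕ) : MvPolynomial (Fin n) ℚ :=
  MvPolynomial.aeval (fun i : Fin n => (∑ j : Fin n, X j) - X i) (schur μ n)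

/-- The number of standard fillings of a finite set `s` of cells: bijective fillings by
`0, 1, …, |s|-1` that strictly increase along rows and down columns. -/
noncomputable def sytCountCells (s : Finset (ℕ × ℕ)) : ℕ :=
  Nat.card {T : s → ℕ //
    Function.Injective T ∧ (∀ x, T x < s.card) ∧
    (∀ a b : s, a.1.1 = b.1.1 → a.1.2 < b.1.2 → T a < T b) ∧
    (∀ a b : s, a.1.2 = b.1.2 → a.1.1 < b.1.1 → T a < T b)}

/-- `f^{λ/μ}`: the number of standard Young tableaux of skew shape `λ/μ`,
with the convention that it is `0` if `μ ⊄ λ`. -/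
noncomputable def sytSkew (lam nu : YoungDiagram) : ℕ :=
  if nu ≤ lam then sytCountCells (lam.cells \ nu.cells) else 0

/-- The number of semistandard fillings of a finite set `s` of cells with entries in
`{lo, …, hi}` (weakly increasing along rows, strictly increasing down columns). -/
noncomputable def ssytCountCells (s : Finset (ℕ × ℕ)) (lo hi : ℕ) : ℕ :=
  Nat.card {T : s → ℕ //
    (∀ x, lo ≤ T x ∧ T x ≤ hi) ∧
    (∀ a b : s, a.1.1 = b.1.1 → a.1.2 ≤ b.1.2 → T a ≤ T b) ∧
    (∀ a b : s, a.1.2 = b.1.2 → a.1.1 < b.1.1 → T a < T b)}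

/-- The single-row Young diagram `(k)`. -/
noncomputable def rowD (k : ℕ) : YoungDiagram :=
  YoungDiagram.ofRowLens [k] (List.Pairwise.sortedGE (List.pairwise_singleton _ k))

/-- The single-column Young diagram `(1^k)`. -/
noncomputable def colD (k : ℕ) : YoungDiagram := (rowD k).transpose

/-! Specialise `x₁ ↦ t` and `xᵢ ↦ 0` for `i ≥ 2`. A Schur polynomial `s_κ` becomes `t^|κ|` if `κ`
is a single row and `0` otherwise (a column-strict filling cannot be constant), so the coefficient
of `t^|λ|` on the right-hand side is exactly `c_{(|λ|)}`. On the left, `(x₁+⋯+xₙ) - xᵢ` becomes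
`0` for `i = 1` and `t` otherwise, so `s̄_λ` becomes `t^|λ|` times the number of semistandard
fillings that avoid the entry `1`, i.e. with entries in `{2,…,n}`. -/

lemma mem_rowD {k : ℕ} {c : ℕ × ℕ} : c ∈ rowD k ↔ c.1 = 0 ∧ c.2 < k := by
  rw [rowD, YoungDiagram.mem_ofRowLens]
  rcases c with ⟨i, j⟩
  constructor
  · rintro ⟨hi, hj⟩
    simp only [List.length_singleton, Nat.lt_one_iff] at hi
    subst hi
    simpa using hj
  · rintro ⟨rfl, hj⟩
    exact ⟨by simp, by simpa using hj⟩

lemma card_rowD (k : ℕ) : (rowD k).card = k := by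
  have hcells : (rowD k).cells = {0} ×ˢ range k := by
    ext ⟨i, j⟩
    simp [mem_rowD, eq_comm, and_comm]
  rw [YoungDiagram.card, hcells, card_product, card_singleton, card_range, one_mul]

lemma colLen_rowD_le_one (k : ℕ) : (rowD k).colLen 0 ≤ 1 := by
  by_contra! h
  simpa [mem_rowD] using YoungDiagram.mem_iff_lt_colLen.2 h

lemma eq_rowD_card_of_colLen_le_one {κ : YoungDiagram} (h : κ.colLen 0 ≤ 1) :
    κ = rowD κ.card := by
  have hκ : κ = rowD (κ.rowLen 0) := by
    ext ⟨i, j⟩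
    rw [YoungDiagram.mem_cells, YoungDiagram.mem_cells, mem_rowD]
    constructor
    · intro hij
      obtain rfl : i = 0 := by
        by_contra hi
        have h10 : (1, 0) ∈ κ := κ.up_left_mem (by omega) (Nat.zero_le j) hij
        exact absurd (YoungDiagram.mem_iff_lt_colLen.1 h10) (by omega)
      exact ⟨rfl, YoungDiagram.mem_iff_lt_rowLen.1 hij⟩
    · rintro ⟨rfl, hj⟩
      exact YoungDiagram.mem_iff_lt_rowLen.2 hj
  rw [hκ, card_rowD]

def IsSemistandard (μ : YoungDiagram) {n : ℕ} (T : μ.cells → Fin n) : Prop :=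
  (∀ a b : μ.cells, a.1.1 = b.1.1 → a.1.2 ≤ b.1.2 → T a ≤ T b) ∧
  (∀ a b : μ.cells, a.1.2 = b.1.2 → a.1.1 < b.1.1 → T a < T b)

lemma schur_eq_sum (μ : YoungDiagram) (n : ℕ) :
    schur μ n = ∑ T : μ.cells → Fin n, if IsSemistandard μ T then ∏ c, X (T c) else 0 :=
  sum_congr rfl fun _ _ => if_congr Iff.rfl rfl rfl

lemma aeval_ite_schur {A : Type*} [CommSemiring A] [Algebra ℚ A] (μ : YoungDiagram) {n : ℕ}
    (p : Fin n → Prop) [DecidablePred p] (a : A) :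
    aeval (fun i => if p i then a else 0) (schur μ n) =
      #{T : μ.cells → Fin n | IsSemistandard μ T ∧ ∀ c, p (T c)} • a ^ μ.card := by
  rw [schur_eq_sum, map_sum, card_filter, sum_smul]
  refine sum_congr rfl fun T _ => ?_
  simp only [apply_ite (aeval _), map_zero, map_prod, aeval_X, prod_ite_zero, prod_const,
    card_univ, Fintype.card_coe]
  by_cases hT : IsSemistandard μ T <;> by_cases hp : ∀ c, p (T c) <;> simp [hT, hp]

lemma isSemistandard_const_iff {μ : YoungDiagram} {n : ℕ} (z : Fin n) :
    IsSemistandard μ (fun _ => z) ↔ μ.colLen 0 ≤ 1 := by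
  constructor
  · intro h
    by_contra! hcol
    have h10 : (1, 0) ∈ μ := YoungDiagram.mem_iff_lt_colLen.2 hcol
    have h00 : (0, 0) ∈ μ := μ.up_left_mem zero_le_one le_rfl h10
    exact lt_irrefl z (h.2 ⟨_, (μ.mem_cells _).2 h00⟩ ⟨_, (μ.mem_cells _).2 h10⟩ rfl one_pos)
  · intro h
    refine ⟨fun _ _ _ _ => le_rfl, fun a b hcol hrow => absurd hrow ?_⟩
    have hb : b.1.1 < μ.colLen b.1.2 := YoungDiagram.mem_iff_lt_colLen.1 ((μ.mem_cells _).1 b.2)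
    have := μ.colLen_anti 0 b.1.2 (Nat.zero_le _)
    omega

lemma card_isSemistandard_forall_eq (μ : YoungDiagram) {n : ℕ} (z : Fin n) :
    #{T : μ.cells → Fin n | IsSemistandard μ T ∧ ∀ c, T c = z} =
      if μ.colLen 0 ≤ 1 then 1 else 0 := by
  have hfilter :
      ({T | IsSemistandard μ T ∧ ∀ c, T c = z} : Finset (μ.cells → Fin n)) =
        ({T | μ.colLen 0 ≤ 1 ∧ T = fun _ => z} : Finset (μ.cells → Fin n)) := by
    refine filter_congr fun T _ => ⟨fun ⟨hT, hz⟩ => ?_, ?_⟩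
    · obtain rfl : T = fun _ => z := funext hz
      exact ⟨(isSemistandard_const_iff z).1 hT, rfl⟩
    · rintro ⟨hcol, rfl⟩
      exact ⟨(isSemistandard_const_iff z).2 hcol, fun _ => rfl⟩
  rw [hfilter]
  split_ifs with hcol <;> simp [hcol, filter_eq']

lemma coeff_aeval_single_schur (κ : YoungDiagram) {n : ℕ} (z : Fin n) (m : ℕ) :
    (aeval (fun i => if i = z then (Polynomial.X : Polynomial ℚ) else 0) (schur κ n)).coeff m =
      if κ = rowD m then 1 else 0 := by
  rw [aeval_ite_schur κ (· = z), card_isSemistandard_forall_eq, Polynomial.coeff_smul,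
    Polynomial.coeff_X_pow]
  by_cases hκ : κ = rowD m
  · simp [hκ, colLen_rowD_le_one, card_rowD]
  · rw [if_neg hκ]
    split_ifs with hcol hm
    · exact absurd (hm ▸ eq_rowD_card_of_colLen_le_one hcol) hκ
    all_goals simp

lemma aeval_single_sbar {A : Type*} [CommRing A] [Algebra ℚ A] (μ : YoungDiagram) {n : ℕ}
    (z : Fin n) (a : A) :
    aeval (fun i => if i = z then a else 0) (sbar μ n) =
      #{T : μ.cells → Fin n | IsSemistandard μ T ∧ ∀ c, T c ≠ z} • a ^ μ.card := by
  have hsubst : (fun i => aeval (fun i => if i = z then a else 0)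
      ((∑ j, X j : MvPolynomial (Fin n) ℚ) - X i)) = fun i => if i ≠ z then a else 0 := by
    funext i
    by_cases hi : i = z <;> simp [hi]
  rw [sbar, ← AlgHom.comp_apply, comp_aeval, hsubst, aeval_ite_schur μ (· ≠ z)]

/-- The entry `k : Fin n` stands for the paper's `k + 1`. -/
lemma card_isSemistandard_forall_ne_zero (μ : YoungDiagram) {n : ℕ} [NeZero n] :
    #{T : μ.cells → Fin n | IsSemistandard μ T ∧ ∀ c, T c ≠ 0} = ssytCountCells μ.cells 2 n := by
  have hval {k : Fin n} : k ≠ 0 ↔ (k : ℕ) ≠ 0 := by rw [Ne, Fin.ext_iff, Fin.val_zero]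
  let e : {T : μ.cells → Fin n // IsSemistandard μ T ∧ ∀ c, T c ≠ 0} ≃
      {S : μ.cells → ℕ // (∀ x, 2 ≤ S x ∧ S x ≤ n) ∧
        (∀ a b : μ.cells, a.1.1 = b.1.1 → a.1.2 ≤ b.1.2 → S a ≤ S b) ∧
        (∀ a b : μ.cells, a.1.2 = b.1.2 → a.1.1 < b.1.1 → S a < S b)} :=
    { toFun := fun T => ⟨fun x => T.1 x + 1,
        fun x => by dsimp only; have := hval.1 (T.2.2 x); have := (T.1 x).isLt; omega,
        fun a b hrow hle => Nat.succ_le_succ (T.2.1.1 a b hrow hle),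
        fun a b hcol hlt => Nat.succ_lt_succ (T.2.1.2 a b hcol hlt)⟩
      invFun := fun S => ⟨fun x => ⟨S.1 x - 1, by have := S.2.1 x; omega⟩,
        ⟨fun a b hrow hle => by
          simp only [Fin.mk_le_mk]; have := S.2.2.1 a b hrow hle; omega,
         fun a b hcol hlt => by
          simp only [Fin.mk_lt_mk]; have := S.2.2.2 a b hcol hlt; have := S.2.1 a; omega⟩,
        fun x => hval.2 (by have := S.2.1 x; dsimp only; omega)⟩
      left_inv := fun T => by ext x; simp
      right_inv := fun S => by ext x; have := S.2.1 x; dsimp only; omega }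
  rw [ssytCountCells, ← Nat.card_congr e, Nat.card_eq_fintype_card, Fintype.card_subtype]

lemma coeff_aeval_single_finsum_smul_schur {n : ℕ} (z : Fin n) (c : YoungDiagram → ℚ)
    (hc : (Function.support c).Finite) (m : ℕ) :
    (aeval (fun i => if i = z then (Polynomial.X : Polynomial ℚ) else 0)
      (∑ᶠ κ, c κ • schur κ n)).coeff m = c (rowD m) := by
  let L : MvPolynomial (Fin n) ℚ →ₗ[ℚ] ℚ :=
    (Polynomial.lcoeff ℚ m).comp (aeval fun i => if i = z then Polynomial.X else 0).toLinearMap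
  calc _ = L (∑ᶠ κ, c κ • schur κ n) := rfl
    _ = ∑ᶠ κ, c κ * L (schur κ n) := by
      rw [map_finsum L (f := fun κ => c κ • schur κ n)
        (hc.subset (Function.support_smul_subset_left c fun κ => schur κ n))]
      simp only [map_smul, smul_eq_mul]
    _ = c (rowD m) := by
      rw [finsum_eq_single _ (rowD m) fun κ hκ => ?_]
      · simp [L, coeff_aeval_single_schur]
      · simp [L, coeff_aeval_single_schur, hκ]

theorem coeff_single_row_sbar_general (n : ℕ) (hn : 2 ≤ n) (lam : YoungDiagram)
    (c : YoungDiagram → ℚ) (hfin : (Function.support c).Finite)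
    (hc : sbar lam n = ∑ᶠ kappa : YoungDiagram, c kappa • schur kappa n) :
    c (rowD lam.card) = (ssytCountCells lam.cells 2 n : ℚ) := by
  have : NeZero n := ⟨by omega⟩
  rw [← coeff_aeval_single_finsum_smul_schur (0 : Fin n) c hfin, ← hc, aeval_single_sbar,
    card_isSemistandard_forall_ne_zero, Polynomial.coeff_smul, Polynomial.coeff_X_pow_self,
    nsmul_eq_mul, mul_one]

/-- single-row coefficient of general Chern plethysm: for a partition `λ`
with at most `n` parts, `n ≥ 2`, the coefficient of `s_{(|λ|)}` in the Schur expansion of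
`\overline{s}_λ(x_1,…,x_n)` equals the number of semistandard Young tableaux of shape `λ`
with entries in `{2,…,n}`. -/
theorem coeff_single_row_sbar (n : ℕ) (hn : 2 ≤ n) (lam : YoungDiagram)
    (hl : lam.colLen 0 ≤ n)
    (c : YoungDiagram → ℚ) (hfin : (Function.support c).Finite)
    (hsupp : ∀ kappa : YoungDiagram, c kappa ≠ 0 → kappa.colLen 0 ≤ n)
    (hc : sbar lam n = ∑ᶠ kappa : YoungDiagram, c kappa • schur kappa n) :
    c (rowD lam.card) = (ssytCountCells lam.cells 2 n : ℚ) :=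
  coeff_single_row_sbar_general n hn lam c hfin hc
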